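/- Let k be an algebraically closed field, and let φ₁ : G → GL(V₁) and φ₂ : G → GL(V₂) be irreducible 2-dimensional representations of a group G that are not isomorphic, and let μ : G → kˣ be a character with det(φ₁(g)) = det(φ₂(g)) = μ(g) for all g ∈ G. Consider the representation φ = φ₁ ⊕ φ₂ of G on V = V₁ ⊕ V₂. Then the space of alternating bilinear forms B on V satisfying B(φ(g)v, φ(g)w) = μ(g)·B(v,w) for all g, v, w has dimension exactly 2 over k. -/

import Mathlib

/-!
An alternating form on `V₁ × V₂` splits into alternating forms on `V₁` and on `V₂` and a pairing
`C` between `V₁` and `V₂`. On a plane every alternating form is a multiple of the area form `ω`,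
and `ω (f v) (f w) = det f * ω v w`; since `det φᵢ = μ`, both diagonal blocks are automatically
`μ`-equivariant, which gives the two dimensions. The nondegenerate `μ`-equivariant form `ω₂` turns
an equivariant pairing `C` into an intertwiner `T : V₁ → V₂` with `C v w = ω₂ (T v) w`, and `T = 0`
by Schur's lemma because `φ₁ ≇ φ₂`.
-/

namespace Module.Basis

variable {k V : Type*} [Field k] [AddCommGroup V] [Module k V] (b : Basis (Fin 2) k V)

noncomputable def areaForm : V →ₗ[k] V →ₗ[k] k :=
  LinearMap.mk₂ k (fun v w => b.repr v 0 * b.repr w 1 - b.repr v 1 * b.repr w 0)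
    (fun _ _ _ => by simp only [map_add, Finsupp.add_apply]; ring)
    (fun _ _ _ => by simp only [map_smul, Finsupp.smul_apply, smul_eq_mul]; ring)
    (fun _ _ _ => by simp only [map_add, Finsupp.add_apply]; ring)
    (fun _ _ _ => by simp only [map_smul, Finsupp.smul_apply, smul_eq_mul]; ring)

@[simp]
lemma areaForm_apply (v w : V) :
    b.areaForm v w = b.repr v 0 * b.repr w 1 - b.repr v 1 * b.repr w 0 :=
  rfl

lemma areaForm_isAlt : b.areaForm.IsAlt := fun v => by
  rw [areaForm_apply, mul_comm, sub_self]

lemma areaForm_eq_det (v w : V) : b.areaForm v w = b.det ![v, w] := by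
  rw [det_apply, Matrix.det_fin_two]
  simp [toMatrix_apply, mul_comm]

lemma areaForm_map_map (f : V →ₗ[k] V) (v w : V) :
    b.areaForm (f v) (f w) = LinearMap.det f * b.areaForm v w := by
  rw [areaForm_eq_det, areaForm_eq_det, ← det_comp]
  congr 1
  ext i
  fin_cases i <;> rfl

lemma injective_areaForm : Function.Injective b.areaForm := by
  refine (injective_iff_map_eq_zero _).mpr fun x hx => ?_
  have h₀ : b.repr x 1 = 0 := by simpa using LinearMap.congr_fun hx (b 0)
  have h₁ : b.repr x 0 = 0 := by simpa using LinearMap.congr_fun hx (b 1)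
  refine b.ext_elem fun i => ?_
  fin_cases i <;> simp [h₀, h₁]

lemma _root_.LinearMap.IsAlt.eq_smul_areaForm {B : V →ₗ[k] V →ₗ[k] k} (hB : B.IsAlt) :
    B = B (b 0) (b 1) • b.areaForm := by
  ext v w
  have hv := b.sum_repr v
  have hw := b.sum_repr w
  rw [Fin.sum_univ_two] at hv hw
  rw [← hv, ← hw]
  simp [hB.self_eq_zero, ← hB.neg (b 0) (b 1)]
  ring

end Module.Basis

section Equivariance

variable {k G V₁ V₂ : Type*} [Field k] [Monoid G]
  [AddCommGroup V₁] [Module k V₁] [AddCommGroup V₂] [Module k V₂]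

def IsEquivariantBilin (φ₁ : G →* (V₁ ≃ₗ[k] V₁)) (φ₂ : G →* (V₂ ≃ₗ[k] V₂)) (μ : G → k)
    (C : V₁ →ₗ[k] V₂ →ₗ[k] k) : Prop :=
  ∀ g v w, C (φ₁ g v) (φ₂ g w) = μ g * C v w

variable {φ₁ : G →* (V₁ ≃ₗ[k] V₁)} {φ₂ : G →* (V₂ ≃ₗ[k] V₂)}

lemma Module.Basis.isEquivariantBilin_areaForm (b : Module.Basis (Fin 2) k V₂) {μ : G → k}
    (hdet : ∀ g, LinearMap.det (φ₂ g : V₂ →ₗ[k] V₂) = μ g) :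
    IsEquivariantBilin φ₂ φ₂ μ b.areaForm := fun g x y => by
  rw [← hdet, ← b.areaForm_map_map]
  rfl

lemma LinearMap.exists_comp_eq_of_injective [FiniteDimensional k V₂]
    {ω : V₂ →ₗ[k] Module.Dual k V₂} (hω : Function.Injective ω) (C : V₁ →ₗ[k] Module.Dual k V₂) :
    ∃ T : V₁ →ₗ[k] V₂, ω ∘ₗ T = C :=
  ((LinearMap.injective_iff_surjective_of_finrank_eq_finrank
    Subspace.dual_finrank_eq.symm).mp hω).surjective_linearMapComp_left C

lemma IsEquivariantBilin.intertwines_of_comp_eq {μ : G → k} {ω : V₂ →ₗ[k] V₂ →ₗ[k] k}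
    (hω : Function.Injective ω) (hωμ : IsEquivariantBilin φ₂ φ₂ μ ω)
    {C : V₁ →ₗ[k] V₂ →ₗ[k] k} (hCμ : IsEquivariantBilin φ₁ φ₂ μ C)
    {T : V₁ →ₗ[k] V₂} (hT : ω ∘ₗ T = C) (g : G) (v : V₁) : T (φ₁ g v) = φ₂ g (T v) := by
  have hωT (v : V₁) (w : V₂) : ω (T v) w = C v w := by rw [← hT]; rfl
  refine hω (LinearMap.ext fun w => ?_)
  obtain ⟨w, rfl⟩ := (φ₂ g).surjective w
  rw [hωT, hCμ, hωμ, hωT]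

lemma intertwiner_eq_zero_or_bijective
    (hirr₁ : ∀ W : Submodule k V₁, (∀ g : G, ∀ v ∈ W, φ₁ g v ∈ W) → W = ⊥ ∨ W = ⊤)
    (hirr₂ : ∀ W : Submodule k V₂, (∀ g : G, ∀ v ∈ W, φ₂ g v ∈ W) → W = ⊥ ∨ W = ⊤)
    {T : V₁ →ₗ[k] V₂} (hT : ∀ g v, T (φ₁ g v) = φ₂ g (T v)) : T = 0 ∨ Function.Bijective T := by
  have hker_inv : ∀ g, ∀ v ∈ LinearMap.ker T, φ₁ g v ∈ LinearMap.ker T := fun g v hv => by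
    rw [LinearMap.mem_ker, hT, LinearMap.mem_ker.mp hv, map_zero]
  have hran_inv : ∀ g, ∀ w ∈ LinearMap.range T, φ₂ g w ∈ LinearMap.range T := by
    rintro g _ ⟨v, rfl⟩
    exact ⟨φ₁ g v, hT g v⟩
  rcases hirr₁ _ hker_inv with hker | hker
  · rcases hirr₂ _ hran_inv with hran | hran
    · exact .inl (LinearMap.range_eq_bot.mp hran)
    · exact .inr ⟨LinearMap.ker_eq_bot.mp hker, LinearMap.range_eq_top.mp hran⟩
  · exact .inl (LinearMap.ker_eq_top.mp hker)

lemma IsEquivariantBilin.eq_zero_of_not_iso (b : Module.Basis (Fin 2) k V₂) {μ : G → k}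
    (hdet : ∀ g, LinearMap.det (φ₂ g : V₂ →ₗ[k] V₂) = μ g)
    (hirr₁ : ∀ W : Submodule k V₁, (∀ g : G, ∀ v ∈ W, φ₁ g v ∈ W) → W = ⊥ ∨ W = ⊤)
    (hirr₂ : ∀ W : Submodule k V₂, (∀ g : G, ∀ v ∈ W, φ₂ g v ∈ W) → W = ⊥ ∨ W = ⊤)
    (hniso : ¬ ∃ e : V₁ ≃ₗ[k] V₂, ∀ (g : G) (v : V₁), e (φ₁ g v) = φ₂ g (e v))
    {C : V₁ →ₗ[k] V₂ →ₗ[k] k} (hC : IsEquivariantBilin φ₁ φ₂ μ C) : C = 0 := by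
  have := Module.Finite.of_basis b
  obtain ⟨T, hT⟩ := LinearMap.exists_comp_eq_of_injective b.injective_areaForm C
  have hTφ := IsEquivariantBilin.intertwines_of_comp_eq b.injective_areaForm
    (b.isEquivariantBilin_areaForm hdet) hC hT
  rcases intertwiner_eq_zero_or_bijective hirr₁ hirr₂ hTφ with rfl | hbij
  · rw [← hT, LinearMap.comp_zero]
  · exact (hniso ⟨.ofBijective T hbij, hTφ⟩).elim

end Equivariance

section DirectSum

variable {k G V V₁ V₂ : Type*} [Field k] [Monoid G] [AddCommGroup V] [Module k V]
  [AddCommGroup V₁] [Module k V₁] [AddCommGroup V₂] [Module k V₂]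

def equivariantAltForms (φ : G →* (V ≃ₗ[k] V)) (μ : G → k) :
    Submodule k (V →ₗ[k] V →ₗ[k] k) where
  carrier := {B | B.IsAlt ∧ IsEquivariantBilin φ φ μ B}
  add_mem' {B C} hB hC := ⟨fun v => by simp [hB.1.self_eq_zero, hC.1.self_eq_zero],
    fun g v w => by simp [hB.2 g v w, hC.2 g v w, mul_add]⟩
  zero_mem' := ⟨fun _ => rfl, fun _ _ _ => by simp⟩
  smul_mem' a B hB := ⟨fun v => by simp [hB.1.self_eq_zero],
    fun g v w => by simp [hB.2 g v w, mul_left_comm]⟩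

def MonoidHom.prodRep (φ₁ : G →* (V₁ ≃ₗ[k] V₁)) (φ₂ : G →* (V₂ ≃ₗ[k] V₂)) :
    G →* ((V₁ × V₂) ≃ₗ[k] (V₁ × V₂)) where
  toFun g := (φ₁ g).prodCongr (φ₂ g)
  map_one' := by ext <;> simp
  map_mul' g h := by ext <;> simp

@[simp]
lemma MonoidHom.prodRep_apply (φ₁ : G →* (V₁ ≃ₗ[k] V₁)) (φ₂ : G →* (V₂ ≃ₗ[k] V₂)) (g : G)
    (v : V₁ × V₂) : φ₁.prodRep φ₂ g v = (φ₁ g v.1, φ₂ g v.2) :=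
  rfl

variable (b₁ : Module.Basis (Fin 2) k V₁) (b₂ : Module.Basis (Fin 2) k V₂)

open LinearMap in
noncomputable def areaFormPair : k × k →ₗ[k] (V₁ × V₂ →ₗ[k] V₁ × V₂ →ₗ[k] k) :=
  (toSpanSingleton k _ (b₁.areaForm.compl₁₂ (fst k V₁ V₂) (fst k V₁ V₂))).coprod
    (toSpanSingleton k _ (b₂.areaForm.compl₁₂ (snd k V₁ V₂) (snd k V₁ V₂)))

@[simp]
lemma areaFormPair_apply (a c : k) (v w : V₁ × V₂) :
    areaFormPair b₁ b₂ (a, c) v w = a * b₁.areaForm v.1 w.1 + c * b₂.areaForm v.2 w.2 := by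
  simp [areaFormPair]

lemma injective_areaFormPair : Function.Injective (areaFormPair b₁ b₂) := by
  refine (injective_iff_map_eq_zero _).mpr fun ⟨a, c⟩ h => ?_
  have ha : a = 0 := by simpa using LinearMap.congr_fun₂ h (b₁ 0, 0) (b₁ 1, 0)
  have hc : c = 0 := by simpa using LinearMap.congr_fun₂ h (0, b₂ 0) (0, b₂ 1)
  rw [ha, hc, Prod.mk_zero_zero]

variable {φ₁ : G →* (V₁ ≃ₗ[k] V₁)} {φ₂ : G →* (V₂ ≃ₗ[k] V₂)} {μ : G → k}

lemma areaFormPair_mem_equivariantAltForms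
    (hdet₁ : ∀ g, LinearMap.det (φ₁ g : V₁ →ₗ[k] V₁) = μ g)
    (hdet₂ : ∀ g, LinearMap.det (φ₂ g : V₂ →ₗ[k] V₂) = μ g) (p : k × k) :
    areaFormPair b₁ b₂ p ∈ equivariantAltForms (φ₁.prodRep φ₂) μ := by
  obtain ⟨a, c⟩ := p
  refine ⟨fun v => ?_, fun g v w => ?_⟩
  · simp [b₁.areaForm_isAlt.self_eq_zero, b₂.areaForm_isAlt.self_eq_zero]
  · simp only [areaFormPair_apply, MonoidHom.prodRep_apply, b₁.isEquivariantBilin_areaForm hdet₁ g,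
      b₂.isEquivariantBilin_areaForm hdet₂ g]
    ring

lemma mem_range_areaFormPair
    (hdet₂ : ∀ g, LinearMap.det (φ₂ g : V₂ →ₗ[k] V₂) = μ g)
    (hirr₁ : ∀ W : Submodule k V₁, (∀ g : G, ∀ v ∈ W, φ₁ g v ∈ W) → W = ⊥ ∨ W = ⊤)
    (hirr₂ : ∀ W : Submodule k V₂, (∀ g : G, ∀ v ∈ W, φ₂ g v ∈ W) → W = ⊥ ∨ W = ⊤)
    (hniso : ¬ ∃ e : V₁ ≃ₗ[k] V₂, ∀ (g : G) (v : V₁), e (φ₁ g v) = φ₂ g (e v))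
    {B : V₁ × V₂ →ₗ[k] V₁ × V₂ →ₗ[k] k} (hB : B ∈ equivariantAltForms (φ₁.prodRep φ₂) μ) :
    B ∈ LinearMap.range (areaFormPair b₁ b₂) := by
  obtain ⟨hBalt, hBμ⟩ := hB
  have hcross : B.compl₁₂ (LinearMap.inl k V₁ V₂) (LinearMap.inr k V₁ V₂) = 0 :=
    IsEquivariantBilin.eq_zero_of_not_iso b₂ hdet₂ hirr₁ hirr₂ hniso fun g v w => by
      simpa using hBμ g (v, 0) (0, w)
  have h₁ := LinearMap.IsAlt.eq_smul_areaForm b₁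
    (B := B.compl₁₂ (LinearMap.inl k V₁ V₂) (LinearMap.inl k V₁ V₂)) fun v => hBalt _
  have h₂ := LinearMap.IsAlt.eq_smul_areaForm b₂
    (B := B.compl₁₂ (LinearMap.inr k V₁ V₂) (LinearMap.inr k V₁ V₂)) fun v => hBalt _
  refine ⟨(B (b₁ 0, 0) (b₁ 1, 0), B (0, b₂ 0) (0, b₂ 1)), ?_⟩
  ext v w
  · simpa using (LinearMap.congr_fun₂ h₁ v w).symm
  · simpa using (LinearMap.congr_fun₂ hcross v w).symm
  · simpa [← hBalt.neg (w, 0)] using LinearMap.congr_fun₂ hcross w v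
  · simpa using (LinearMap.congr_fun₂ h₂ v w).symm

lemma range_areaFormPair
    (hdet₁ : ∀ g, LinearMap.det (φ₁ g : V₁ →ₗ[k] V₁) = μ g)
    (hdet₂ : ∀ g, LinearMap.det (φ₂ g : V₂ →ₗ[k] V₂) = μ g)
    (hirr₁ : ∀ W : Submodule k V₁, (∀ g : G, ∀ v ∈ W, φ₁ g v ∈ W) → W = ⊥ ∨ W = ⊤)
    (hirr₂ : ∀ W : Submodule k V₂, (∀ g : G, ∀ v ∈ W, φ₂ g v ∈ W) → W = ⊥ ∨ W = ⊤)
    (hniso : ¬ ∃ e : V₁ ≃ₗ[k] V₂, ∀ (g : G) (v : V₁), e (φ₁ g v) = φ₂ g (e v)) :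
    LinearMap.range (areaFormPair b₁ b₂) = equivariantAltForms (φ₁.prodRep φ₂) μ := by
  refine le_antisymm ?_ fun B hB => mem_range_areaFormPair b₁ b₂ hdet₂ hirr₁ hirr₂ hniso hB
  rintro _ ⟨p, rfl⟩
  exact areaFormPair_mem_equivariantAltForms b₁ b₂ hdet₁ hdet₂ p

end DirectSum

theorem stmt_11_general {k G V₁ V₂ : Type*} [Field k]
    [AddCommGroup V₁] [Module k V₁]
    [AddCommGroup V₂] [Module k V₂] [Group G]
    (hdim₁ : Module.finrank k V₁ = 2) (hdim₂ : Module.finrank k V₂ = 2)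
    (φ₁ : G →* (V₁ ≃ₗ[k] V₁)) (φ₂ : G →* (V₂ ≃ₗ[k] V₂))
    (hirr₁ : ∀ W : Submodule k V₁, (∀ g : G, ∀ v ∈ W, φ₁ g v ∈ W) → W = ⊥ ∨ W = ⊤)
    (hirr₂ : ∀ W : Submodule k V₂, (∀ g : G, ∀ v ∈ W, φ₂ g v ∈ W) → W = ⊥ ∨ W = ⊤)
    (hniso : ¬ ∃ e : V₁ ≃ₗ[k] V₂, ∀ (g : G) (v : V₁), e (φ₁ g v) = φ₂ g (e v))
    (μ : G →* kˣ)
    (hdet₁ : ∀ g : G, LinearMap.det (φ₁ g : V₁ →ₗ[k] V₁) = (μ g : k))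
    (hdet₂ : ∀ g : G, LinearMap.det (φ₂ g : V₂ →ₗ[k] V₂) = (μ g : k)) :
    ∃ S : Submodule k (((V₁ × V₂) →ₗ[k] (V₁ × V₂) →ₗ[k] k)),
      (S : Set (((V₁ × V₂) →ₗ[k] (V₁ × V₂) →ₗ[k] k))) =
        {B | (∀ v, B v v = 0) ∧
          ∀ (g : G) (v w : V₁ × V₂),
            B (φ₁ g v.1, φ₂ g v.2) (φ₁ g w.1, φ₂ g w.2) = (μ g : k) * B v w} ∧
      Module.finrank k S = 2 := by
  have := Module.finite_of_finrank_eq_succ hdim₁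
  have := Module.finite_of_finrank_eq_succ hdim₂
  let b₁ := Module.finBasisOfFinrankEq k V₁ hdim₁
  let b₂ := Module.finBasisOfFinrankEq k V₂ hdim₂
  refine ⟨equivariantAltForms (φ₁.prodRep φ₂) (fun g => (μ g : k)), rfl, ?_⟩
  rw [← range_areaFormPair b₁ b₂ hdet₁ hdet₂ hirr₁ hirr₂ hniso,
    LinearMap.finrank_range_of_inj (injective_areaFormPair b₁ b₂),
    Module.finrank_prod, Module.finrank_self]

/-- For `φ = φ₁ ⊕ φ₂` with `φ₁ ≇ φ₂` irreducible `2`-dimensional and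
`det φ₁ = det φ₂ = μ`, the space of `μ`-equivariant alternating bilinear forms
has dimension `2`. -/
theorem stmt_11 {k G V₁ V₂ : Type*} [Field k] [IsAlgClosed k]
    [AddCommGroup V₁] [Module k V₁] [FiniteDimensional k V₁]
    [AddCommGroup V₂] [Module k V₂] [FiniteDimensional k V₂] [Group G]
    (hdim₁ : Module.finrank k V₁ = 2) (hdim₂ : Module.finrank k V₂ = 2)
    (φ₁ : G →* (V₁ ≃ₗ[k] V₁)) (φ₂ : G →* (V₂ ≃ₗ[k] V₂))
    (hirr₁ : ∀ W : Submodule k V₁, (∀ g : G, ∀ v ∈ W, φ₁ g v ∈ W) → W = ⊥ ∨ W = ⊤)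
    (hirr₂ : ∀ W : Submodule k V₂, (∀ g : G, ∀ v ∈ W, φ₂ g v ∈ W) → W = ⊥ ∨ W = ⊤)
    (hniso : ¬ ∃ e : V₁ ≃ₗ[k] V₂, ∀ (g : G) (v : V₁), e (φ₁ g v) = φ₂ g (e v))
    (μ : G →* kˣ)
    (hdet₁ : ∀ g : G, LinearMap.det (φ₁ g : V₁ →ₗ[k] V₁) = (μ g : k))
    (hdet₂ : ∀ g : G, LinearMap.det (φ₂ g : V₂ →ₗ[k] V₂) = (μ g : k)) :
    ∃ S : Submodule k (((V₁ × V₂) →ₗ[k] (V₁ × V₂) →ₗ[k] k)),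
      (S : Set (((V₁ × V₂) →ₗ[k] (V₁ × V₂) →ₗ[k] k))) =
        {B | (∀ v, B v v = 0) ∧
          ∀ (g : G) (v w : V₁ × V₂),
            B (φ₁ g v.1, φ₂ g v.2) (φ₁ g w.1, φ₂ g w.2) = (μ g : k) * B v w} ∧
      Module.finrank k S = 2 :=
  stmt_11_general hdim₁ hdim₂ φ₁ φ₂ hirr₁ hirr₂ hniso μ hdet₁ hdet₂
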